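/- arXiv:2104.05581 — 2 statements merged into one kernel-verified Lean document; each statement's English description precedes it below -/
import Mathlib

section
/- Let p be homogeneous of degree 2a and satisfy p(0,-1) = exp(iπ(2a - 2μ)) p(0,1) with μ + μ' = 2a. Define q(ξ) = (|ξ'| - iξₙ)^{-μ'} · p(ξ) · (|ξ'| + iξₙ)^{-μ} using the principal branches. Then q(0,…,0,-1) = q(0,…,0,1), i.e. q satisfies the principal 0-transmission condition, and q(0,…,0,1) = exp(-iπδ)·p(0,…,0,1) where μ = a + δ. -/
/-!
With the principal branch `log (±i) = ±iπ/2`, so at `ξ' = 0` every factor of `q` is an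
exponential: `q(0,1) = e^{iπμ'/2} e^{-iπμ/2} p(0,1) = e^{-iπδ} p(0,1)`, while
`q(0,-1) = e^{-iπμ'/2} e^{iπμ/2} p(0,-1) = e^{iπδ} p(0,-1)`. The transmission condition
`p(0,-1) = e^{-2iπδ} p(0,1)` makes the two equal.
-/

open Complex
open scoped Real

lemma I_cpow_eq_exp (w : ℂ) : I ^ w = exp (π / 2 * I * w) := by
  rw [cpow_def_of_ne_zero I_ne_zero, log_I]

lemma neg_I_cpow_eq_exp (w : ℂ) : (-I) ^ w = exp (-(π / 2 * I * w)) := by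
  rw [cpow_def_of_ne_zero (neg_ne_zero.mpr I_ne_zero), log_neg_I]
  ring_nf

lemma exp_mul_mul_exp (x y c : ℂ) : exp x * c * exp y = exp (x + y) * c := by
  rw [exp_add]
  ring

theorem stmt7_general (n : ℕ) (a : ℝ) (μ : ℂ)
    (p : EuclideanSpace ℝ (Fin (n + 1)) → ℂ)
    (htrans : p (-(EuclideanSpace.single (Fin.last n) (1 : ℝ))) =
      Complex.exp ((Real.pi : ℂ) * Complex.I * (2 * (a : ℂ) - 2 * μ)) *
        p (EuclideanSpace.single (Fin.last n) (1 : ℝ))) :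
    Complex.I ^ (-(2 * (a : ℂ) - μ)) *
        p (-(EuclideanSpace.single (Fin.last n) (1 : ℝ))) * (-Complex.I) ^ (-μ) =
      (-Complex.I) ^ (-(2 * (a : ℂ) - μ)) *
        p (EuclideanSpace.single (Fin.last n) (1 : ℝ)) * Complex.I ^ (-μ) ∧
    (-Complex.I) ^ (-(2 * (a : ℂ) - μ)) *
        p (EuclideanSpace.single (Fin.last n) (1 : ℝ)) * Complex.I ^ (-μ) =
      Complex.exp (-(Real.pi : ℂ) * Complex.I * (μ - (a : ℂ))) *
        p (EuclideanSpace.single (Fin.last n) (1 : ℝ)) := by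
  set p₁ := p (EuclideanSpace.single (Fin.last n) (1 : ℝ))
  have q_neg : I ^ (-(2 * (a : ℂ) - μ)) * p (-(EuclideanSpace.single (Fin.last n) 1)) *
      (-I) ^ (-μ) = exp (-π * I * (μ - a)) * p₁ := by
    rw [htrans, I_cpow_eq_exp, neg_I_cpow_eq_exp, ← mul_assoc, ← exp_add, exp_mul_mul_exp]
    congr 2
    ring
  have q_pos : (-I) ^ (-(2 * (a : ℂ) - μ)) * p₁ * I ^ (-μ) = exp (-π * I * (μ - a)) * p₁ := by
    rw [I_cpow_eq_exp, neg_I_cpow_eq_exp, exp_mul_mul_exp]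
    congr 2
    ring
  exact ⟨q_neg.trans q_pos.symm, q_pos⟩

/-- If `p` is homogeneous of degree `2a` and satisfies the principal μ-transmission condition
at the interior normal, then `q(ξ) = (|ξ'|-iξₙ)^{-μ'} p(ξ) (|ξ'|+iξₙ)^{-μ}` (with `μ' = 2a-μ`)
satisfies the principal 0-transmission condition `q(0,-1) = q(0,1)`, and
`q(0,1) = e^{-iπδ} p(0,1)` with `δ = μ - a`. -/
theorem stmt7 (n : ℕ) (a : ℝ) (ha : 0 < a) (μ : ℂ)
    (p : EuclideanSpace ℝ (Fin (n + 1)) → ℂ)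
    (hom : ∀ t : ℝ, 0 < t → ∀ ξ, ξ ≠ 0 → p (t • ξ) = ((t ^ (2 * a) : ℝ) : ℂ) * p ξ)
    (htrans : p (-(EuclideanSpace.single (Fin.last n) (1 : ℝ))) =
      Complex.exp ((Real.pi : ℂ) * Complex.I * (2 * (a : ℂ) - 2 * μ)) *
        p (EuclideanSpace.single (Fin.last n) (1 : ℝ))) :
    Complex.I ^ (-(2 * (a : ℂ) - μ)) *
        p (-(EuclideanSpace.single (Fin.last n) (1 : ℝ))) * (-Complex.I) ^ (-μ) =
      (-Complex.I) ^ (-(2 * (a : ℂ) - μ)) *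
        p (EuclideanSpace.single (Fin.last n) (1 : ℝ)) * Complex.I ^ (-μ) ∧
    (-Complex.I) ^ (-(2 * (a : ℂ) - μ)) *
        p (EuclideanSpace.single (Fin.last n) (1 : ℝ)) * Complex.I ^ (-μ) =
      Complex.exp (-(Real.pi : ℂ) * Complex.I * (μ - (a : ℂ))) *
        p (EuclideanSpace.single (Fin.last n) (1 : ℝ)) :=
  stmt7_general n a μ p htrans
end

section
/- Let q : ℝⁿ \ {0} → ℂ be homogeneous of degree 0, C¹ on ℝⁿ \ {0}, with q(0,…,0,1) = q(0,…,0,-1) = s₀. Then f = q - s₀ satisfies the estimate |f(ξ', ξₙ)| ≤ C |ξ'| / |ξ| for all ξ = (ξ', ξₙ) ≠ 0, for some constant C. -/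
/-!
On the unit sphere, `q - s₀` vanishes at the poles `±e` and is differentiable there, so near each
pole it is `O(‖u ∓ e‖)`, and on the sphere near `±e` the chordal distance `‖u ∓ e‖` is at most
`√2 |u'|`. Away from the poles `|u'|` is bounded below and `q` is continuous, so the bound
`‖q u - s₀‖ ≤ C |u'|` holds near every point of the sphere, hence on all of it by compactness.
Homogeneity of degree `0` of `q` and of degree `1` of `|ξ'|` transports it to every `ξ ≠ 0`.
-/

open Asymptotics Filter Metric Set Topology
open scoped RealInnerProductSpace

theorem IsCompact.isBigO_principal_of_forall_nhdsWithin {X E F : Type*} [TopologicalSpace X]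
    [Norm E] [SeminormedAddCommGroup F] {f : X → E} {g : X → F} {s : Set X} (hs : IsCompact s)
    (h : ∀ x ∈ s, f =O[𝓝[s] x] g) : f =O[𝓟 s] g := by
  refine hs.induction_on (p := fun t => f =O[𝓟 t] g) (by simp [isBigO_bot])
    (fun t t' htt' h => h.mono (principal_mono.2 htt'))
    (fun t t' ht ht' => by simpa only [sup_principal] using ht.sup ht') fun x hx => ?_
  obtain ⟨c, hc⟩ := (h x hx).bound
  exact ⟨_, hc, IsBigO.of_bound c (mem_principal_self _)⟩

theorem ContinuousWithinAt.isBigO_of_ne_zero {X E : Type*} [TopologicalSpace X]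
    [SeminormedAddCommGroup E] {f : X → E} {g : X → ℝ} {s : Set X} {x : X}
    (hf : ContinuousWithinAt f s x) (hg : ContinuousAt g x) (hgx : g x ≠ 0) :
    f =O[𝓝[s] x] g := by
  refine (hf.tendsto.isBigO_one ℝ).trans ((isBigO_const_left_iff_pos_le_norm one_ne_zero).2
    ⟨‖g x‖ / 2, by positivity, nhdsWithin_le_nhds ?_⟩)
  exact hg.norm.eventually (lt_mem_nhds (half_lt_self (norm_pos_iff.2 hgx))) |>.mono
    fun _ h => h.le

section normOrthogonal

variable {E : Type*} [NormedAddCommGroup E] [InnerProductSpace ℝ E]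

/-- For a unit vector `e`, the norm of the component of `u` orthogonal to `e`: this is `|ξ'|` for
`ξ = (ξ', ξₙ)` and `e = (0, …, 0, 1)`. -/
noncomputable def normOrthogonal (e u : E) : ℝ :=
  √(‖u‖ ^ 2 - ⟪e, u⟫ ^ 2)

lemma normOrthogonal_nonneg (e u : E) : 0 ≤ normOrthogonal e u :=
  Real.sqrt_nonneg _

@[simp]
lemma normOrthogonal_neg (e : E) : normOrthogonal (-e) = normOrthogonal e := by
  ext u
  simp [normOrthogonal, inner_neg_left]

lemma normOrthogonal_smul (e u : E) {t : ℝ} (ht : 0 ≤ t) :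
    normOrthogonal e (t • u) = t * normOrthogonal e u := by
  rw [normOrthogonal, normOrthogonal, norm_smul, inner_smul_right, Real.norm_of_nonneg ht,
    mul_pow, mul_pow, ← mul_sub, Real.sqrt_mul (sq_nonneg t), Real.sqrt_sq ht]

lemma continuous_normOrthogonal (e : E) : Continuous (normOrthogonal e) := by
  unfold normOrthogonal
  fun_prop

lemma norm_sub_le_sqrt_two_mul_normOrthogonal {e u : E} (he : ‖e‖ = 1) (hu : ‖u‖ = 1)
    (h : 0 ≤ ⟪e, u⟫) : ‖u - e‖ ≤ √2 * normOrthogonal e u := by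
  have h₁ : ⟪e, u⟫ ≤ 1 := real_inner_le_one_of_norm_eq_one he hu
  rw [normOrthogonal, ← Real.sqrt_mul zero_le_two, ← Real.sqrt_sq (norm_nonneg _)]
  refine Real.sqrt_le_sqrt ?_
  rw [norm_sub_sq_real, hu, he, real_inner_comm]
  nlinarith

lemma eq_or_eq_neg_of_normOrthogonal_eq_zero {e u : E} (he : ‖e‖ = 1) (hu : ‖u‖ = 1)
    (h : normOrthogonal e u = 0) : u = e ∨ u = -e := by
  have hsq : ⟪e, u⟫ ^ 2 = 1 := by
    rw [normOrthogonal, Real.sqrt_eq_zero', hu] at h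
    have := abs_real_inner_le_norm e u
    rw [he, hu, one_mul] at this
    nlinarith [abs_nonneg ⟪e, u⟫, sq_abs ⟪e, u⟫]
  rcases sq_eq_one_iff.1 hsq with h1 | h1
  · exact Or.inl ((inner_eq_one_iff_of_norm_eq_one he hu).1 h1).symm
  · exact Or.inr (by rw [(inner_eq_neg_one_iff_of_norm_eq_one he hu).1 h1, neg_neg])

variable {F : Type*} [NormedAddCommGroup F] [NormedSpace ℝ F]

lemma DifferentiableAt.isBigO_sub_normOrthogonal {q : E → F} {e : E} (he : ‖e‖ = 1)
    (hq : DifferentiableAt ℝ q e) :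
    (fun u => q u - q e) =O[𝓝[sphere 0 1] e] normOrthogonal e := by
  have hpos : ∀ᶠ u in 𝓝 e, 0 < ⟪e, u⟫ :=
    continuousAt_const.eventually_lt (continuous_const.inner continuous_id).continuousAt
      (by simp [he])
  refine (hq.isBigO_sub.mono nhdsWithin_le_nhds).trans (IsBigO.of_bound (√2) ?_)
  filter_upwards [self_mem_nhdsWithin, nhdsWithin_le_nhds hpos] with u hu hu_pos
  rw [Real.norm_of_nonneg (normOrthogonal_nonneg e u)]
  exact norm_sub_le_sqrt_two_mul_normOrthogonal he (mem_sphere_zero_iff_norm.1 hu) hu_pos.le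

variable [FiniteDimensional ℝ E]

lemma isBigO_sub_normOrthogonal_sphere {q : E → F} {e : E} {s₀ : F} (he : ‖e‖ = 1)
    (hcont : ContinuousOn q (sphere 0 1)) (hdiff : DifferentiableAt ℝ q e)
    (hdiff' : DifferentiableAt ℝ q (-e)) (h₁ : q e = s₀) (h₂ : q (-e) = s₀) :
    (fun u => q u - s₀) =O[𝓟 (sphere 0 1)] normOrthogonal e := by
  refine (isCompact_sphere 0 1).isBigO_principal_of_forall_nhdsWithin fun x hx => ?_
  by_cases hx₀ : normOrthogonal e x = 0
  · rcases eq_or_eq_neg_of_normOrthogonal_eq_zero he (mem_sphere_zero_iff_norm.1 hx) hx₀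
      with rfl | rfl
    · simpa only [h₁] using hdiff.isBigO_sub_normOrthogonal he
    · simpa only [h₂, normOrthogonal_neg] using
        hdiff'.isBigO_sub_normOrthogonal (by rwa [norm_neg])
  · exact ((hcont x hx).sub continuousWithinAt_const).isBigO_of_ne_zero
      (continuous_normOrthogonal e).continuousAt hx₀

theorem exists_norm_sub_le_normOrthogonal_div_norm {q : E → F} {e : E} {s₀ : F} (he : ‖e‖ = 1)
    (hom : ∀ t : ℝ, 0 < t → ∀ ξ, ξ ≠ 0 → q (t • ξ) = q ξ)
    (hcont : ContinuousOn q (sphere 0 1)) (hdiff : DifferentiableAt ℝ q e)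
    (hdiff' : DifferentiableAt ℝ q (-e)) (h₁ : q e = s₀) (h₂ : q (-e) = s₀) :
    ∃ C : ℝ, ∀ ξ : E, ξ ≠ 0 → ‖q ξ - s₀‖ ≤ C * normOrthogonal e ξ / ‖ξ‖ := by
  obtain ⟨C, hC⟩ := (isBigO_sub_normOrthogonal_sphere he hcont hdiff hdiff' h₁ h₂).bound
  refine ⟨C, fun ξ hξ => ?_⟩
  have hξ_pos : 0 < ‖ξ‖ := norm_pos_iff.2 hξ
  have hu : ‖ξ‖⁻¹ • ξ ∈ sphere (0 : E) 1 := by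
    simp [norm_smul, hξ_pos.ne']
  have hbound : ‖q (‖ξ‖⁻¹ • ξ) - s₀‖ ≤ C * ‖normOrthogonal e (‖ξ‖⁻¹ • ξ)‖ := hC hu
  rw [hom _ (inv_pos.2 hξ_pos) ξ hξ, Real.norm_of_nonneg (normOrthogonal_nonneg _ _),
    normOrthogonal_smul _ _ (inv_nonneg.2 hξ_pos.le)] at hbound
  calc ‖q ξ - s₀‖ ≤ C * (‖ξ‖⁻¹ * normOrthogonal e ξ) := hbound
    _ = C * normOrthogonal e ξ / ‖ξ‖ := by ring

end normOrthogonal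

lemma EuclideanSpace.normOrthogonal_single_last {n : ℕ} (ξ : EuclideanSpace ℝ (Fin (n + 1))) :
    normOrthogonal (EuclideanSpace.single (Fin.last n) 1) ξ =
      √(∑ i : Fin n, ξ (Fin.castSucc i) ^ 2) := by
  rw [normOrthogonal, EuclideanSpace.inner_single_left, EuclideanSpace.norm_sq_eq,
    Fin.sum_univ_castSucc]
  simp

/-- If `q` is homogeneous of degree 0, C¹ away from 0, with the same value `s₀` at
`(0,…,0,1)` and `(0,…,0,-1)`, then `|q(ξ) - s₀| ≤ C |ξ'|/|ξ|`. -/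
theorem stmt8 (n : ℕ) (s₀ : ℂ) (q : EuclideanSpace ℝ (Fin (n + 1)) → ℂ)
    (hom : ∀ t : ℝ, 0 < t → ∀ ξ, ξ ≠ 0 → q (t • ξ) = q ξ)
    (hq : ContDiffOn ℝ 1 q {ξ | ξ ≠ 0})
    (h1 : q (EuclideanSpace.single (Fin.last n) (1 : ℝ)) = s₀)
    (h2 : q (-(EuclideanSpace.single (Fin.last n) (1 : ℝ))) = s₀) :
    ∃ C : ℝ, ∀ ξ : EuclideanSpace ℝ (Fin (n + 1)), ξ ≠ 0 →
      ‖q ξ - s₀‖ ≤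
        C * Real.sqrt (∑ i : Fin n, (ξ (Fin.castSucc i)) ^ 2) / ‖ξ‖ := by
  have he : ‖EuclideanSpace.single (Fin.last n) (1 : ℝ)‖ = 1 := by simp
  have hdiff : ∀ ξ : EuclideanSpace ℝ (Fin (n + 1)), ‖ξ‖ = 1 → DifferentiableAt ℝ q ξ :=
    fun ξ hξ => (hq.differentiableOn one_ne_zero).differentiableAt
      (isOpen_ne.mem_nhds (ne_zero_of_norm_ne_zero (by simp [hξ])))
  have hcont : ContinuousOn q (sphere 0 1) :=
    hq.continuousOn.mono fun ξ hξ => ne_zero_of_mem_unit_sphere ⟨ξ, hξ⟩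
  simpa only [EuclideanSpace.normOrthogonal_single_last] using
    exists_norm_sub_le_normOrthogonal_div_norm he hom hcont (hdiff _ he)
      (hdiff _ (by rw [norm_neg, he])) h1 h2
end
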